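/- The Reidemeister number of the automorphism φ of G equals 4; i.e., G has exactly 4 equivalence classes under the relation h ~ g·h·φ(g)⁻¹. -/

import Mathlib

/-- The group of automorphisms of ℤ² under composition, written multiplicatively. -/
instance : Group (AddAut (ℤ × ℤ)) where
  mul g h := AddEquiv.trans h g
  one := AddEquiv.refl _
  inv := AddEquiv.symm
  mul_assoc _ _ _ := rfl
  one_mul _ := rfl
  mul_one _ := rfl
  inv_mul_cancel := AddEquiv.self_trans_symm

@[simp] lemma AddAut.zz_mul_apply (e f : AddAut (ℤ × ℤ)) (p : ℤ × ℤ) : (e * f) p = e (f p) := rfl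
@[simp] lemma AddAut.zz_one_apply (p : ℤ × ℤ) : (1 : AddAut (ℤ × ℤ)) p = p := rfl
@[simp] lemma AddAut.zz_inv_apply_self (e : AddAut (ℤ × ℤ)) (p : ℤ × ℤ) : e⁻¹ (e p) = p :=
  e.symm_apply_apply p
@[simp] lemma AddAut.zz_apply_inv_self (e : AddAut (ℤ × ℤ)) (p : ℤ × ℤ) : e (e⁻¹ p) = p :=
  e.apply_symm_apply p

/-- The automorphism of ℤ² given by the matrix A = [[2,1],[1,1]]. -/
def α : AddAut (ℤ × ℤ) where
  toFun p := (2 * p.1 + p.2, p.1 + p.2)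
  invFun p := (p.1 - p.2, -p.1 + 2 * p.2)
  left_inv p := by obtain ⟨x, y⟩ := p; simp only [Prod.mk.injEq]; constructor <;> ring
  right_inv p := by obtain ⟨x, y⟩ := p; simp only [Prod.mk.injEq]; constructor <;> ring
  map_add' p q := by simp only [Prod.fst_add, Prod.snd_add, Prod.mk_add_mk, Prod.mk.injEq]; constructor <;> ring

/-- The automorphism of ℤ² given by the matrix M = [[0,1],[-1,0]]. -/
def μ : AddAut (ℤ × ℤ) where
  toFun p := (p.2, -p.1)
  invFun p := (-p.2, p.1)
  left_inv p := by simp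
  right_inv p := by simp
  map_add' p q := by simp only [Prod.fst_add, Prod.snd_add, Prod.mk_add_mk, Prod.mk.injEq]; constructor <;> first | trivial | ring

/-- The semidirect product G = ℤ² ⋊_α ℤ. -/
@[ext] structure G where
  x : ℤ × ℤ
  n : ℤ

instance : Mul G := ⟨fun g h => ⟨g.x + (α ^ g.n) h.x, g.n + h.n⟩⟩
instance : One G := ⟨⟨0, 0⟩⟩
instance : Inv G := ⟨fun g => ⟨-((α ^ (-g.n)) g.x), -g.n⟩⟩

lemma G.mul_def (g h : G) : g * h = ⟨g.x + (α ^ g.n) h.x, g.n + h.n⟩ := rfl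
lemma G.one_def : (1 : G) = ⟨0, 0⟩ := rfl
lemma G.inv_def (g : G) : g⁻¹ = ⟨-((α ^ (-g.n)) g.x), -g.n⟩ := rfl

instance : Group G where
  mul_assoc a b c := by
    ext : 1
    · show (a.x + (α ^ a.n) b.x) + (α ^ (a.n + b.n)) c.x
        = a.x + (α ^ a.n) (b.x + (α ^ b.n) c.x)
      rw [zpow_add, AddAut.zz_mul_apply, map_add]; abel
    · show a.n + b.n + c.n = a.n + (b.n + c.n); ring
  one_mul a := by
    ext : 1
    · show (0 : ℤ × ℤ) + (α ^ (0:ℤ)) a.x = a.x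
      simp
    · show (0 : ℤ) + a.n = a.n; ring
  mul_one a := by
    ext : 1
    · show a.x + (α ^ a.n) 0 = a.x
      simp
    · show a.n + 0 = a.n; ring
  inv_mul_cancel a := by
    ext : 1
    · show -((α ^ (-a.n)) a.x) + (α ^ (-a.n)) a.x = 0
      simp
    · show -a.n + a.n = 0; ring

lemma mu_alpha : μ * α = α⁻¹ * μ := by
  apply AddEquiv.ext
  intro p
  rw [AddAut.zz_mul_apply, AddAut.zz_mul_apply]
  show μ (α p) = α.symm (μ p)
  show ((α p).2, -(α p).1) = α.symm (p.2, -p.1)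
  show ((p.1 + p.2 : ℤ), -(2 * p.1 + p.2)) = (p.2 - (-p.1), -p.2 + 2 * (-p.1))
  simp only [Prod.mk.injEq]; constructor <;> ring

lemma mu_alpha_conj : μ * α * μ⁻¹ = α⁻¹ := by
  rw [mu_alpha, mul_assoc]
  simp

lemma mu_alpha_zpow (n : ℤ) : μ * α ^ n = α ^ (-n) * μ := by
  have h : MulAut.conj μ (α ^ n) = α ^ (-n) := by
    rw [map_zpow, MulAut.conj_apply, mu_alpha_conj, inv_zpow, zpow_neg]
  rw [MulAut.conj_apply] at h
  calc μ * α ^ n = (μ * α ^ n * μ⁻¹) * μ := by group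
    _ = α ^ (-n) * μ := by rw [h]

/-- The automorphism φ((m,k),n) = ((k,-m),-n). -/
def φ : G ≃* G where
  toFun g := ⟨μ g.x, -g.n⟩
  invFun g := ⟨μ⁻¹ g.x, -g.n⟩
  left_inv g := by
    ext : 1
    · show μ⁻¹ (μ g.x) = g.x
      simp
    · simp
  right_inv g := by
    ext : 1
    · show μ (μ⁻¹ g.x) = g.x
      simp
    · simp
  map_mul' g h := by
    ext : 1
    · show μ (g.x + (α ^ g.n) h.x) = μ g.x + (α ^ (-g.n)) (μ h.x)
      rw [map_add]
      congr 1
      calc μ ((α ^ g.n) h.x) = (μ * α ^ g.n) h.x := rfl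
        _ = (α ^ (-g.n) * μ) h.x := by rw [mu_alpha_zpow]
        _ = (α ^ (-g.n)) (μ h.x) := rfl
    · show -(g.n + h.n) = -g.n + -h.n; ring

/-! Twisted conjugation by `(0, k)` shifts the `ℤ`-coordinate by `2k`, so every class meets the
fiber over `0` or `1`, and two elements of one such fiber `ε` can only be twisted conjugate by
some `(w, 0)`, which acts on the fiber by `v ↦ v + (1 - αᵋμ) w`. Both `1 - μ` and `1 - αμ` have
determinant `2`, so each fiber splits into two classes, told apart by a character `ℤ² → ℤ/2`
whose kernel is the image of `1 - αᵋμ`. -/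

section TwistedConj

variable {H : Type*} [Group H] (ψ : H ≃* H)

def twistedConj (g h : H) : H := g * h * (ψ g)⁻¹

lemma twistedConj_mul (g g' h : H) :
    twistedConj ψ (g * g') h = twistedConj ψ g (twistedConj ψ g' h) := by
  simp only [twistedConj, map_mul, mul_inv_rev]
  group

lemma twistedConj_one (h : H) : twistedConj ψ 1 h = h := by
  simp [twistedConj]

lemma twistedConj_inv_twistedConj (g h : H) : twistedConj ψ g⁻¹ (twistedConj ψ g h) = h := by
  simp only [twistedConj, map_inv, inv_inv]
  group

end TwistedConj

lemma μ_apply (p : ℤ × ℤ) : μ p = (p.2, -p.1) := rfl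

lemma α_apply (p : ℤ × ℤ) : α p = (2 * p.1 + p.2, p.1 + p.2) := rfl

lemma twistedConj_φ (g h : G) :
    twistedConj φ g h =
      ⟨g.x + (α ^ g.n) h.x - (α ^ (2 * g.n + h.n)) (μ g.x), h.n + 2 * g.n⟩ := by
  have hφ : φ g = ⟨μ g.x, -g.n⟩ := rfl
  rw [twistedConj, hφ, G.inv_def, G.mul_def, G.mul_def]
  ext : 1
  · show (g.x + (α ^ g.n) h.x) + (α ^ (g.n + h.n)) (-((α ^ (- -g.n)) (μ g.x))) = _
    rw [neg_neg, map_neg, ← AddAut.zz_mul_apply, ← zpow_add,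
      show g.n + h.n + g.n = 2 * g.n + h.n by ring, sub_eq_add_neg]
  · show g.n + h.n + - -g.n = h.n + 2 * g.n
    ring

lemma twistedConj_φ_n (g h : G) : (twistedConj φ g h).n = h.n + 2 * g.n := by
  rw [twistedConj_φ]

lemma twistedConj_φ_of_n_eq_zero (w : ℤ × ℤ) (h : G) :
    twistedConj φ ⟨w, 0⟩ h = ⟨h.x + (w - (α ^ h.n) (μ w)), h.n⟩ := by
  rw [twistedConj_φ]
  ext : 1
  · simp only [zpow_zero, AddAut.zz_one_apply, mul_zero, zero_add]
    rw [add_comm w, add_sub_assoc]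
  · simp

def normalForm (h : G) : G := twistedConj φ ⟨0, -(h.n / 2)⟩ h

lemma normalForm_n (h : G) : (normalForm h).n = h.n % 2 := by
  rw [normalForm, twistedConj_φ_n]
  change h.n + 2 * -(h.n / 2) = h.n % 2
  omega

lemma normalForm_n_mem (h : G) : (normalForm h).n = 0 ∨ (normalForm h).n = 1 := by
  rw [normalForm_n]
  omega

lemma normalForm_of_n_div_two_eq_zero {h : G} (hn : h.n / 2 = 0) : normalForm h = h := by
  rw [normalForm, hn, neg_zero, ← G.one_def, twistedConj_one]

lemma exists_normalForm_twistedConj (g h : G) :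
    ∃ w, normalForm (twistedConj φ g h) = twistedConj φ ⟨w, 0⟩ (normalForm h) := by
  set g' : G := ⟨0, -((twistedConj φ g h).n / 2)⟩ * g * (⟨0, -(h.n / 2)⟩ : G)⁻¹
  have hg' : normalForm (twistedConj φ g h) = twistedConj φ g' (normalForm h) := by
    rw [normalForm, normalForm, twistedConj_mul, twistedConj_mul, twistedConj_inv_twistedConj]
  have hn : g'.n = 0 := by
    have := congrArg G.n hg'
    rw [twistedConj_φ_n, normalForm_n, normalForm_n, twistedConj_φ_n] at this
    omega
  exact ⟨g'.x, by rw [hg', ← hn]⟩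

-- `1 + ε` makes this `v₁ + v₂` on the even fiber and `v₁` on the odd one: the cokernels of
-- `1 - μ` and `1 - α μ`.
def fiberChar (ε : ℤ) : ℤ × ℤ →+ ZMod 2 :=
  AddMonoidHom.mk' (fun v => ((v.1 + (1 + ε) * v.2 : ℤ) : ZMod 2)) fun u v => by
    simp only [Prod.fst_add, Prod.snd_add]
    push_cast
    ring

lemma fiberChar_apply (ε : ℤ) (v : ℤ × ℤ) :
    fiberChar ε v = ((v.1 + (1 + ε) * v.2 : ℤ) : ZMod 2) := rfl

lemma exists_sub_eq_iff_fiberChar_eq_zero {ε : ℤ} (hε : ε = 0 ∨ ε = 1) (u : ℤ × ℤ) :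
    (∃ w, w - (α ^ ε) (μ w) = u) ↔ fiberChar ε u = 0 := by
  rw [fiberChar_apply, ZMod.intCast_zmod_eq_zero_iff_dvd]
  rcases hε with rfl | rfl
  · constructor
    · rintro ⟨w, rfl⟩
      exact ⟨w.1, by simp [μ_apply]; ring⟩
    · rintro ⟨e, he⟩
      exact ⟨(e, e - u.1), by simp [Prod.ext_iff, μ_apply]; omega⟩
  · simp only [zpow_one]
    constructor
    · rintro ⟨w, rfl⟩
      exact ⟨2 * w.1 - w.2, by simp [μ_apply, α_apply]; ring⟩
    · rintro ⟨e, he⟩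
      exact ⟨(u.2, 2 * u.2 - e), by simp [Prod.ext_iff, μ_apply, α_apply]; omega⟩

lemma fiberChar_val_zero (ε : ℤ) (c : ZMod 2) : fiberChar ε ((c.val : ℤ), 0) = c := by
  simp [fiberChar_apply]

def reidemeisterInv (h : G) : ZMod 2 × ZMod 2 :=
  ((normalForm h).n, fiberChar (normalForm h).n (normalForm h).x)

lemma reidemeisterInv_twistedConj (g h : G) :
    reidemeisterInv (twistedConj φ g h) = reidemeisterInv h := by
  obtain ⟨w, hw⟩ := exists_normalForm_twistedConj g h
  have hw₀ := (exists_sub_eq_iff_fiberChar_eq_zero (normalForm_n_mem h) _).1 ⟨w, rfl⟩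
  simp only [reidemeisterInv, hw, twistedConj_φ_of_n_eq_zero, map_add, hw₀, add_zero]

def reidemeisterRep (c : ZMod 2 × ZMod 2) : G := ⟨((c.2.val : ℤ), 0), (c.1.val : ℤ)⟩

lemma reidemeisterInv_reidemeisterRep (c : ZMod 2 × ZMod 2) :
    reidemeisterInv (reidemeisterRep c) = c := by
  have hn : (reidemeisterRep c).n / 2 = 0 := by
    have := ZMod.val_lt c.1
    simp only [reidemeisterRep]
    omega
  simp only [reidemeisterInv, normalForm_of_n_div_two_eq_zero hn]
  ext
  · simp [reidemeisterRep]
  · exact fiberChar_val_zero _ _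

lemma exists_twistedConj_eq_reidemeisterRep_of_n_mem {x : G} (hx : x.n = 0 ∨ x.n = 1) :
    ∃ w, twistedConj φ ⟨w, 0⟩ x = reidemeisterRep (x.n, fiberChar x.n x.x) := by
  obtain ⟨w, hw⟩ := (exists_sub_eq_iff_fiberChar_eq_zero hx
    ((((fiberChar x.n x.x).val : ℤ), 0) - x.x)).2 (by rw [map_sub, fiberChar_val_zero, sub_self])
  refine ⟨w, ?_⟩
  rw [twistedConj_φ_of_n_eq_zero, hw, add_sub_cancel]
  rcases hx with hx | hx <;> rw [hx] <;> rfl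

lemma exists_twistedConj_eq_reidemeisterRep (h : G) :
    ∃ g, twistedConj φ g h = reidemeisterRep (reidemeisterInv h) := by
  obtain ⟨w, hw⟩ := exists_twistedConj_eq_reidemeisterRep_of_n_mem (normalForm_n_mem h)
  refine ⟨⟨w, 0⟩ * ⟨0, -(h.n / 2)⟩, ?_⟩
  rw [twistedConj_mul, ← normalForm, hw, reidemeisterInv]

def reidemeisterClassEquiv :
    Quot (fun h h' : G => ∃ g : G, h' = g * h * (φ g)⁻¹) ≃ ZMod 2 × ZMod 2 where
  toFun := Quot.lift reidemeisterInv fun h _ ⟨g, hg⟩ =>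
    hg ▸ (reidemeisterInv_twistedConj g h).symm
  invFun c := Quot.mk _ (reidemeisterRep c)
  left_inv := Quot.ind fun h =>
    let ⟨g, hg⟩ := exists_twistedConj_eq_reidemeisterRep h
    (Quot.sound ⟨g, hg.symm⟩).symm
  right_inv := reidemeisterInv_reidemeisterRep

theorem stmt9 :
    Nat.card (Quot fun h h' : G => ∃ g : G, h' = g * h * (φ g)⁻¹) = 4 := by
  rw [Nat.card_congr reidemeisterClassEquiv, Nat.card_prod, Nat.card_zmod]
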